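/- arXiv:2107.09407 — 2 statements merged into one kernel-verified Lean document; each statement's English description precedes it below -/
import Mathlib

section
/- The Blaschke product Bl(z) = (z² + 1/3)/(1 + z²/3) is weakly expanding on the unit circle: for every z with |z| = 1, one has |Bl'(z)| ≥ 1, with equality if and only if z² = 1. -/
/-!
Clearing denominators, `Bl z = (3z² + 1)/(3 + z²)` and `Bl'(z) = 16z/(3 + z²)²`, so on the unit
circle `‖Bl'(z)‖ = 16/‖3 + z²‖²`. The triangle inequality gives `‖3 + z²‖ ≤ 4`, and since the
norm of ℂ is strictly convex, equality forces `z²` onto the ray of `3`, i.e. `z² = 1`.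
-/

open Complex

/-- The parabolic Blaschke product. -/
noncomputable def Bl : ℂ → ℂ := fun z => (z ^ 2 + 1 / 3) / (1 + z ^ 2 / 3)

lemma Bl_eq (z : ℂ) : Bl z = (3 * z ^ 2 + 1) / (3 + z ^ 2) := by
  rw [Bl, ← mul_div_mul_left _ _ (three_ne_zero' ℂ)]
  ring_nf

lemma hasDerivAt_Bl {z : ℂ} (hz : 3 + z ^ 2 ≠ 0) :
    HasDerivAt Bl (16 * z / (3 + z ^ 2) ^ 2) z := by
  have hnum : HasDerivAt (fun z : ℂ => 3 * z ^ 2 + 1) (3 * (2 * z)) z := by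
    simpa using ((hasDerivAt_pow 2 z).const_mul 3).add_const 1
  have hden : HasDerivAt (fun z : ℂ => 3 + z ^ 2) (2 * z) z := by
    simpa using (hasDerivAt_pow 2 z).const_add 3
  rw [show Bl = fun z => (3 * z ^ 2 + 1) / (3 + z ^ 2) from funext Bl_eq]
  exact (hnum.div hden hz).congr_deriv (by ring)

lemma three_add_ne_zero_of_norm_eq_one {w : ℂ} (hw : ‖w‖ = 1) : 3 + w ≠ 0 := by
  intro h
  rw [eq_neg_of_add_eq_zero_right h, norm_neg] at hw
  norm_num at hw

lemma norm_deriv_Bl {z : ℂ} (hz : ‖z‖ = 1) : ‖deriv Bl z‖ = 16 / ‖3 + z ^ 2‖ ^ 2 := by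
  have hne := three_add_ne_zero_of_norm_eq_one (show ‖z ^ 2‖ = 1 by rw [norm_pow, hz, one_pow])
  rw [(hasDerivAt_Bl hne).deriv, norm_div, norm_mul, norm_pow, hz]
  norm_num

lemma norm_ofReal_add_eq_iff {r : ℝ} (hr : 0 < r) {w : ℂ} (hw : ‖w‖ = 1) :
    ‖(r : ℂ) + w‖ = r + 1 ↔ w = 1 := by
  constructor
  · intro h
    have hray : SameRay ℝ (r : ℂ) w := by
      rw [sameRay_iff_norm_add, h, norm_real, Real.norm_of_nonneg hr.le, hw]
    have hunit : (r⁻¹ : ℝ) • (r : ℂ) = 1 := by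
      rw [real_smul, ← ofReal_mul, inv_mul_cancel₀ hr.ne', ofReal_one]
    have hray_one : SameRay ℝ (1 : ℂ) w := hunit ▸ hray.pos_smul_left (inv_pos.mpr hr)
    exact (hray_one.eq_of_norm_eq (by rw [norm_one, hw])).symm
  · rintro rfl
    norm_cast
    rw [Real.norm_of_nonneg (by linarith)]

/-- `Bl` is weakly expanding on the unit circle: `|Bl′(z)| ≥ 1` there,
with equality iff `z² = 1`. -/
theorem Bl_weakly_expanding (z : ℂ) (hz : ‖z‖ = 1) :
    1 ≤ ‖deriv Bl z‖ ∧
    (‖deriv Bl z‖ = 1 ↔ z ^ 2 = 1) := by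
  have hz2 : ‖z ^ 2‖ = 1 := by rw [norm_pow, hz, one_pow]
  have hpos : 0 < ‖3 + z ^ 2‖ := norm_pos_iff.mpr (three_add_ne_zero_of_norm_eq_one hz2)
  have hle : ‖3 + z ^ 2‖ ≤ 4 :=
    calc ‖3 + z ^ 2‖ ≤ ‖(3 : ℂ)‖ + ‖z ^ 2‖ := norm_add_le _ _
      _ = 4 := by rw [hz2]; norm_num
  rw [norm_deriv_Bl hz, ← norm_ofReal_add_eq_iff three_pos hz2]
  push_cast
  constructor
  · rw [one_le_div (by positivity)]
    nlinarith
  · rw [div_eq_one_iff_eq (by positivity), eq_comm, show (16 : ℝ) = 4 ^ 2 by norm_num,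
      pow_left_inj₀ hpos.le (by norm_num) two_ne_zero]
    norm_num
end

section
/- Let m₂ : ℝ/ℤ → ℝ/ℤ be the doubling map m₂(θ) = 2θ mod 1. For every irreducible rational p/q with q ≥ 1, there exists a q-element cycle {θ₀ < θ₁ < ⋯ < θ_{q-1}} ⊂ ℝ/ℤ of m₂ such that m₂(θ_i) = θ_{(i+p) mod q} for all i (i.e. a cycle of combinatorial rotation number p/q for angle doubling). -/
/-!
For `α ∈ [0, 1)` the angle `θ_α(x) = ∑_{m ≥ 0} ⌊x + mα⌋ / 2^(m+1)` has as binary digits the jumps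
`⌊x + (m+1)α⌋ - ⌊x + mα⌋` of the orbit of `x` under the rotation by `α`. Doubling shifts these
digits, so `2 θ_α(x) ≡ θ_α(fract (x + α)) (mod 1)`: `θ_α` carries the rotation by `α` to angle
doubling. With `α = p/q`, the angles `θ_α(i/q)` form the cycle. Each term of `θ_α(x)` is monotone
in `x`, and it is strictly monotone on the points `i/q` because, by coprimality, some `i/q + mα`
lies at `-1/q` modulo `1`, where its floor and that of `j/q + mα` differ for `i < j`.
-/

noncomputable def sturmianAngle (α x : ℝ) : ℝ := ∑' m : ℕ, (⌊x + m * α⌋ : ℝ) / 2 ^ (m + 1)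

lemma abs_floor_le_abs_add_one (y : ℝ) : |(⌊y⌋ : ℝ)| ≤ |y| + 1 := by
  have h₁ := Int.floor_le y
  have h₂ := Int.lt_floor_add_one y
  rw [abs_le]
  constructor <;> cases abs_cases y <;> linarith

lemma summable_sturmianAngle (α x : ℝ) :
    Summable fun m : ℕ => (⌊x + m * α⌋ : ℝ) / 2 ^ (m + 1) := by
  have hgeom : Summable fun m : ℕ => (1 / 2 : ℝ) ^ m := summable_geometric_two
  have harith : Summable fun m : ℕ => (m : ℝ) ^ 1 * (1 / 2 : ℝ) ^ m :=
    summable_pow_mul_geometric_of_norm_lt_one 1 (by norm_num)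
  refine ((hgeom.mul_left ((|x| + 1) / 2)).add (harith.mul_left (|α| / 2))).of_norm_bounded
    fun m => ?_
  have hfloor : |(⌊x + m * α⌋ : ℝ)| ≤ |x| + 1 + m * |α| := by
    have := abs_add_le x (m * α)
    rw [abs_mul, Nat.abs_cast] at this
    linarith [abs_floor_le_abs_add_one (x + m * α)]
  rw [Real.norm_eq_abs, abs_div, abs_of_pos (by positivity : (0 : ℝ) < 2 ^ (m + 1))]
  calc |(⌊x + m * α⌋ : ℝ)| / 2 ^ (m + 1) ≤ (|x| + 1 + m * |α|) / 2 ^ (m + 1) := by gcongr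
    _ = _ := by rw [one_div_pow, pow_succ]; field_simp

lemma two_mul_sturmianAngle (α x : ℝ) :
    2 * sturmianAngle α x = ⌊x⌋ + ⌊x + α⌋ + sturmianAngle α (Int.fract (x + α)) := by
  have hdouble (m : ℕ) : 2 * ((⌊x + m * α⌋ : ℝ) / 2 ^ (m + 1)) = ⌊x + m * α⌋ / 2 ^ m := by
    rw [pow_succ]; field_simp
  have hshift (m : ℕ) : (⌊x + (m + 1 : ℕ) * α⌋ : ℝ)
      = ⌊Int.fract (x + α) + m * α⌋ + ⌊x + α⌋ := by
    rw [← Int.cast_add, ← Int.floor_add_intCast]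
    congr 2
    push_cast
    linarith [Int.fract_add_floor (x + α)]
  have hconst : ∑' m : ℕ, (⌊x + α⌋ : ℝ) / 2 ^ (m + 1) = ⌊x + α⌋ := by
    simpa only [pow_succ', div_div] using tsum_geometric_two' (⌊x + α⌋ : ℝ)
  have hconst_summable : Summable fun m : ℕ => (⌊x + α⌋ : ℝ) / 2 ^ (m + 1) := by
    simpa using summable_sturmianAngle 0 (x + α)
  have hsum := (summable_sturmianAngle α x).mul_left 2
  simp only [hdouble] at hsum
  rw [sturmianAngle, ← tsum_mul_left]
  simp only [hdouble]
  rw [hsum.tsum_eq_zero_add]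
  simp only [hshift, add_div]
  rw [(summable_sturmianAngle α _).tsum_add hconst_summable, hconst, sturmianAngle]
  simp only [Nat.cast_zero, zero_mul, add_zero, pow_zero, div_one]
  ring

lemma sturmianAngle_le_sturmianAngle {α β x y : ℝ}
    (h : ∀ m : ℕ, ⌊x + m * α⌋ ≤ ⌊y + m * β⌋) : sturmianAngle α x ≤ sturmianAngle β y :=
  (summable_sturmianAngle α x).tsum_le_tsum
    (fun m => div_le_div_of_nonneg_right (Int.cast_le.mpr (h m)) (by positivity))
    (summable_sturmianAngle β y)

lemma sturmianAngle_lt_sturmianAngle {α β x y : ℝ}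
    (h : ∀ m : ℕ, ⌊x + m * α⌋ ≤ ⌊y + m * β⌋) {m : ℕ} (hm : ⌊x + m * α⌋ < ⌊y + m * β⌋) :
    sturmianAngle α x < sturmianAngle β y :=
  (summable_sturmianAngle α x).tsum_lt_tsum (i := m)
    (fun k => div_le_div_of_nonneg_right (Int.cast_le.mpr (h k)) (by positivity))
    (div_lt_div_of_pos_right (Int.cast_lt.mpr hm) (by positivity))
    (summable_sturmianAngle β y)

-- `sturmianAngle 1 0 = ∑ m / 2^(m+1)`, and the doubling identity reads `2 θ = 1 + θ` for it.
lemma sturmianAngle_one_zero : sturmianAngle 1 0 = 1 := by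
  have h := two_mul_sturmianAngle 1 0
  norm_num at h
  linarith

lemma sturmianAngle_nonneg {α x : ℝ} (hα : 0 ≤ α) (hx : 0 ≤ x) : 0 ≤ sturmianAngle α x := by
  have h : sturmianAngle 0 0 ≤ sturmianAngle α x :=
    sturmianAngle_le_sturmianAngle fun m => by simpa using Int.floor_nonneg.mpr (by positivity)
  simpa [sturmianAngle] using h

lemma sturmianAngle_lt_one {α x : ℝ} (hα : α < 1) (hx : x < 1) : sturmianAngle α x < 1 := by
  have hle (m : ℕ) : ⌊x + m * α⌋ ≤ ⌊(0 : ℝ) + m * 1⌋ := by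
    rw [zero_add, mul_one, Int.floor_natCast, ← Int.lt_add_one_iff, Int.floor_lt]
    push_cast
    nlinarith [m.cast_nonneg (α := ℝ)]
  obtain ⟨m, hm⟩ := exists_nat_gt (1 / (1 - α))
  have hlt : ⌊x + m * α⌋ < ⌊(0 : ℝ) + m * 1⌋ := by
    rw [zero_add, mul_one, Int.floor_natCast, Int.floor_lt]
    rw [div_lt_iff₀ (by linarith)] at hm
    push_cast
    nlinarith
  simpa [sturmianAngle_one_zero] using sturmianAngle_lt_sturmianAngle hle hlt

lemma exists_dvd_add_mul_of_coprime {p q : ℕ} [NeZero q] (h : p.Coprime q) (a : ℕ) :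
    ∃ m : ℕ, q ∣ a + m * p := by
  let u := ZMod.unitOfCoprime p h
  refine ⟨(-(a : ZMod q) * ↑u⁻¹).val, ?_⟩
  rw [← ZMod.natCast_eq_zero_iff]
  push_cast
  rw [ZMod.natCast_zmod_val, mul_assoc, ← ZMod.coe_unitOfCoprime p h, ← Units.val_mul,
    inv_mul_cancel, Units.val_one]
  ring

lemma sturmianAngle_natCast_div_lt {P q : ℕ} [NeZero q] (hP : P.Coprime q) {i j : ℕ}
    (hij : i < j) : sturmianAngle (P / q) (i / q) < sturmianAngle (P / q) (j / q) := by
  have hq : (0 : ℝ) < q := Nat.cast_pos.mpr (NeZero.pos q)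
  have hij' : (i : ℝ) + 1 ≤ j := by exact_mod_cast hij
  have hle (m : ℕ) : ⌊(i : ℝ) / q + m * (P / q)⌋ ≤ ⌊(j : ℝ) / q + m * (P / q)⌋ :=
    Int.floor_mono (by gcongr)
  obtain ⟨m, n, hn⟩ := exists_dvd_add_mul_of_coprime hP (i + 1)
  have hn' : (i : ℝ) / q + m * (P / q) + 1 / q = n := by
    have hn_real : (i : ℝ) + 1 + m * P = q * n := by exact_mod_cast hn
    field_simp
    linarith
  refine sturmianAngle_lt_sturmianAngle hle (m := m) ?_
  calc ⌊(i : ℝ) / q + m * (P / q)⌋ < (n : ℤ) := by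
        rw [Int.floor_lt, Int.cast_natCast, ← hn']
        linarith [one_div_pos.mpr hq]
    _ ≤ ⌊(j : ℝ) / q + m * (P / q)⌋ := by
        rw [Int.le_floor, Int.cast_natCast, ← hn']
        have : ((i : ℝ) + 1) / q ≤ j / q := by gcongr
        rw [add_div] at this
        linarith

/-- For every irreducible `p/q` there is a `q`-cycle of the angle-doubling map
`m₂(θ) = 2θ mod 1` with combinatorial rotation number `p/q`:
angles `θ₀ < θ₁ < ⋯ < θ_{q-1}` in `[0,1)` with `2·θ i ≡ θ ((i+p) mod q) (mod 1)`. -/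
theorem exists_doubling_cycle_rotation_number (p q : ℕ) (hq : 0 < q)
    (hpq : Nat.Coprime p q) :
    ∃ θ : Fin q → ℝ,
      StrictMono θ ∧
      (∀ i, θ i ∈ Set.Ico (0 : ℝ) 1) ∧
      (∀ i : Fin q, ∃ k : ℤ,
        2 * θ i = θ ⟨(i.1 + p) % q, Nat.mod_lt _ hq⟩ + k) := by
  have : NeZero q := ⟨hq.ne'⟩
  have hq' : (0 : ℝ) < q := by exact_mod_cast hq
  have hdiv_lt_one {a : ℕ} (ha : a < q) : (a : ℝ) / q < 1 := by
    rw [div_lt_one hq']; exact_mod_cast ha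
  set α : ℝ := (p % q : ℕ) / q
  refine ⟨fun i => sturmianAngle α (i / q), fun i j hij => ?_, fun i => ⟨?_, ?_⟩, fun i => ?_⟩
  · exact sturmianAngle_natCast_div_lt ((ZMod.coprime_mod_iff_coprime p q).mpr hpq) hij
  · exact sturmianAngle_nonneg (by positivity) (by positivity)
  · exact sturmianAngle_lt_one (hdiv_lt_one (Nat.mod_lt p hq)) (hdiv_lt_one i.isLt)
  · refine ⟨⌊(i : ℝ) / q⌋ + ⌊(i : ℝ) / q + α⌋, ?_⟩
    have hfract : Int.fract ((i : ℝ) / q + α) = ((i.1 + p) % q : ℕ) / q := by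
      rw [← add_div, ← Nat.cast_add, Int.fract_div_natCast_eq_div_natCast_mod, Nat.add_mod_mod]
    rw [two_mul_sturmianAngle, hfract]
    push_cast
    ring
end
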